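/- arXiv:2303.15463 — 5 statements merged into one kernel-verified Lean document; each statement's English description precedes it below -/
import Mathlib

section
/- Let U_0 : ℝ^N → ℝ^N satisfy ⟨U_0(x) - U_0(y), x-y⟩ ≤ c_0|x-y|² and let F^δ = (I - δU_0)^{-1} for δ ∈ (0, 1/(2c_0)). Define U_0^δ(y) := U_0(F^δ(y)). Then U_0^δ is globally Lipschitz with |U_0^δ(x) - U_0^δ(y)| ≤ (1/δ)·(1 + 1/√(1-2δc_0))·|x-y| for all x, y. -/
open scoped RealInnerProductSpace

/-- The modified drift `U₀^δ = U₀ ∘ F^δ` is globally Lipschitz with constant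
`(1/δ)(1 + 1/√(1-2δc₀))`. -/
theorem modified_drift_lipschitz {N : ℕ}
    (U₀ : EuclideanSpace ℝ (Fin N) → EuclideanSpace ℝ (Fin N))
    (c₀ : ℝ) (hc₀ : 0 < c₀)
    (hone : ∀ x y, ⟪U₀ x - U₀ y, x - y⟫ ≤ c₀ * ‖x - y‖ ^ 2)
    (δ : ℝ) (hδ0 : 0 < δ) (hδ1 : δ < 1 / (2 * c₀))
    (F : EuclideanSpace ℝ (Fin N) → EuclideanSpace ℝ (Fin N))
    (hF : ∀ y, F y = y + δ • U₀ (F y)) :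
    ∀ x y, ‖U₀ (F x) - U₀ (F y)‖
      ≤ (1 / δ) * (1 + 1 / Real.sqrt (1 - 2 * δ * c₀)) * ‖x - y‖ := by
  intro x y
  have ha : δ * c₀ < 1 / 2 := by
    have h2 : (0:ℝ) < 2 * c₀ := by positivity
    calc δ * c₀ < (1 / (2 * c₀)) * c₀ := by
          exact mul_lt_mul_of_pos_right hδ1 hc₀
      _ = 1 / 2 := by field_simp
  have ha0 : 0 < δ * c₀ := by positivity
  have h1a : 0 < 1 - δ * c₀ := by linarith
  have hs0 : 0 < 1 - 2 * δ * c₀ := by linarith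
  set s := Real.sqrt (1 - 2 * δ * c₀) with hs
  have hspos : 0 < s := Real.sqrt_pos.mpr hs0
  have hsle : s ≤ 1 - δ * c₀ := by
    have : (1 - 2 * δ * c₀) ≤ (1 - δ * c₀) ^ 2 := by nlinarith
    calc s ≤ Real.sqrt ((1 - δ * c₀) ^ 2) := Real.sqrt_le_sqrt this
      _ = 1 - δ * c₀ := by
          rw [Real.sqrt_sq h1a.le]
  set u := F x - F y with hu
  set v := x - y with hv
  have hdiff : u = v + δ • (U₀ (F x) - U₀ (F y)) := by
    rw [hu, hv, smul_sub]
    conv_lhs => rw [hF x, hF y]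
    abel
  -- inner product bound
  have hinner : ⟪U₀ (F x) - U₀ (F y), u⟫ ≤ c₀ * ‖u‖ ^ 2 := hone (F x) (F y)
  have hnormsq : ‖u‖ ^ 2 ≤ ‖v‖ * ‖u‖ + δ * c₀ * ‖u‖ ^ 2 := by
    have h1 : (‖u‖:ℝ) ^ 2 = ⟪u, u⟫ := (real_inner_self_eq_norm_sq u).symm
    have h2 : ⟪u, u⟫ = ⟪v, u⟫ + δ * ⟪U₀ (F x) - U₀ (F y), u⟫ := by
      nth_rewrite 1 [hdiff]
      rw [inner_add_left, real_inner_smul_left]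
    have h3 : ⟪v, u⟫ ≤ ‖v‖ * ‖u‖ := real_inner_le_norm v u
    have h4 : δ * ⟪U₀ (F x) - U₀ (F y), u⟫ ≤ δ * (c₀ * ‖u‖ ^ 2) :=
      mul_le_mul_of_nonneg_left hinner hδ0.le
    nlinarith
  have hcontr : ‖u‖ ≤ ‖v‖ / (1 - δ * c₀) := by
    rcases eq_or_lt_of_le (norm_nonneg u) with h0 | h0
    · rw [← h0]; positivity
    · rw [le_div_iff₀ h1a]
      nlinarith
  have hcontr' : ‖u‖ ≤ ‖v‖ / s := by
    calc ‖u‖ ≤ ‖v‖ / (1 - δ * c₀) := hcontr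
      _ ≤ ‖v‖ / s := by
          apply div_le_div_of_nonneg_left (norm_nonneg v) hspos hsle
  have hkey : U₀ (F x) - U₀ (F y) = (1 / δ) • (u - v) := by
    rw [hdiff, add_sub_cancel_left, smul_smul]
    have hδ : (1 / δ) * δ = 1 := by field_simp
    rw [hδ, one_smul]
  calc ‖U₀ (F x) - U₀ (F y)‖ = (1 / δ) * ‖u - v‖ := by
        rw [hkey, norm_smul, Real.norm_eq_abs, abs_of_pos (by positivity)]
    _ ≤ (1 / δ) * (‖u‖ + ‖v‖) := by
        apply mul_le_mul_of_nonneg_left (norm_sub_le u v) (by positivity)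
    _ ≤ (1 / δ) * (‖v‖ / s + ‖v‖) := by
        apply mul_le_mul_of_nonneg_left (by linarith) (by positivity)
    _ = (1 / δ) * (1 + 1 / s) * ‖v‖ := by field_simp; ring
end

section
/- Let U_0 satisfy the one-sided Lipschitz condition with constant c_0 and the Lyapunov condition ⟨U_0(x), x⟩ ≤ -b_0|x|² + b_1 with b_0 > 0, b_1 ≥ 0. Let F^δ = (I-δU_0)^{-1} for δ ∈ (0, 1/(2c_0)). Then |F^δ(x)|² ≤ |x|²/(1+b_0δ)² + 2b_1δ/(1+b_0δ) for all x ∈ ℝ^N. -/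
open scoped RealInnerProductSpace

/-- Bound on `|F^δ(x)|²` for the implicit Euler resolvent under one-sided
Lipschitz and Lyapunov conditions. -/
theorem resolvent_norm_bound {N : ℕ}
    (U₀ : EuclideanSpace ℝ (Fin N) → EuclideanSpace ℝ (Fin N))
    (c₀ b₀ b₁ : ℝ) (hc₀ : 0 < c₀) (hb₀ : 0 < b₀) (hb₁ : 0 ≤ b₁)
    (hone : ∀ x y, ⟪U₀ x - U₀ y, x - y⟫ ≤ c₀ * ‖x - y‖ ^ 2)
    (hlyap : ∀ x, ⟪U₀ x, x⟫ ≤ -b₀ * ‖x‖ ^ 2 + b₁)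
    (δ : ℝ) (hδ0 : 0 < δ) (hδ1 : δ < 1 / (2 * c₀))
    (F : EuclideanSpace ℝ (Fin N) → EuclideanSpace ℝ (Fin N))
    (hF : ∀ y, F y = y + δ • U₀ (F y)) :
    ∀ x, ‖F x‖ ^ 2 ≤ ‖x‖ ^ 2 / (1 + b₀ * δ) ^ 2 + 2 * b₁ * δ / (1 + b₀ * δ) := by
  intro x
  set z := F x with hz
  have hα : (0:ℝ) < 1 + b₀ * δ := by positivity
  have hexp : ‖z‖ ^ 2 = ⟪x, z⟫ + δ * ⟪U₀ z, z⟫ := by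
    have h := hF x
    calc ‖z‖ ^ 2 = ⟪z, z⟫ := (real_inner_self_eq_norm_sq z).symm
      _ = ⟪x + δ • U₀ z, z⟫ := by rw [← h]
      _ = ⟪x, z⟫ + δ * ⟪U₀ z, z⟫ := by
          rw [inner_add_left, real_inner_smul_left]
  have hLy : ⟪U₀ z, z⟫ ≤ -b₀ * ‖z‖ ^ 2 + b₁ := hlyap z
  have hxz : ⟪x, z⟫ ≤ ‖x‖ * ‖z‖ := real_inner_le_norm x z
  have hyoung : ‖x‖ * ‖z‖ ≤ ‖x‖ ^ 2 / (2 * (1 + b₀ * δ)) + (1 + b₀ * δ) * ‖z‖ ^ 2 / 2 := by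
    rw [div_add_div _ _ (by positivity) (by norm_num), le_div_iff₀ (by positivity)]
    nlinarith [sq_nonneg (‖x‖ - (1 + b₀ * δ) * ‖z‖)]
  have hkey : ‖z‖ ^ 2 ≤ ‖x‖ ^ 2 / (2 * (1 + b₀ * δ)) + (1 + b₀ * δ) * ‖z‖ ^ 2 / 2
      + δ * (-b₀ * ‖z‖ ^ 2 + b₁) := by
    have := mul_le_mul_of_nonneg_left hLy hδ0.le
    linarith
  have hmain : (1 + b₀ * δ) / 2 * ‖z‖ ^ 2 ≤ ‖x‖ ^ 2 / (2 * (1 + b₀ * δ)) + δ * b₁ := by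
    nlinarith [hkey]
  rw [div_add_div _ _ (by positivity) hα.ne', le_div_iff₀ (by positivity)]
  have h2 : ‖x‖ ^ 2 / (2 * (1 + b₀ * δ)) * (2 * (1 + b₀ * δ)) = ‖x‖ ^ 2 := by
    field_simp
  nlinarith [mul_le_mul_of_nonneg_right hmain (by positivity : (0:ℝ) ≤ 2 * (1 + b₀ * δ)),
    mul_pos hα hα, sq_nonneg ‖z‖]
end

section
/- Let U_0 satisfy the Lyapunov condition ⟨U_0(x), x⟩ ≤ -b_0|x|² + b_1 (b_0 > 0, b_1 ≥ 0), the one-sided Lipschitz condition with constant c_0, and let U_0^δ(y) = U_0(F^δ(y)) with F^δ = (I-δU_0)^{-1}. Then for δ ∈ (0, 1/(2b_0)), the modified drift satisfies ⟨U_0^δ(x), x⟩ ≤ -(b_0/2)|x|² + b_1 for all x ∈ ℝ^N. -/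
open scoped RealInnerProductSpace

/-- The modified drift `U₀^δ = U₀ ∘ F^δ` satisfies a Lyapunov condition with
constants `b₀/2` and `b₁`. -/
theorem modified_drift_lyapunov {N : ℕ}
    (U₀ : EuclideanSpace ℝ (Fin N) → EuclideanSpace ℝ (Fin N))
    (c₀ b₀ b₁ : ℝ) (hc₀ : 0 < c₀) (hb₀ : 0 < b₀) (hb₁ : 0 ≤ b₁)
    (hone : ∀ x y, ⟪U₀ x - U₀ y, x - y⟫ ≤ c₀ * ‖x - y‖ ^ 2)
    (hlyap : ∀ x, ⟪U₀ x, x⟫ ≤ -b₀ * ‖x‖ ^ 2 + b₁)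
    (δ : ℝ) (hδ0 : 0 < δ) (hδ1 : δ < 1 / (2 * b₀))
    (F : EuclideanSpace ℝ (Fin N) → EuclideanSpace ℝ (Fin N))
    (hF : ∀ y, F y = y + δ • U₀ (F y)) :
    ∀ x, ⟪U₀ (F x), x⟫ ≤ -(b₀ / 2) * ‖x‖ ^ 2 + b₁ := by
  intro x
  set u := U₀ (F x) with hu
  have h := hlyap (F x)
  rw [← hu, hF x, ← hu] at h
  have h1 : ⟪u, x + δ • u⟫ = ⟪u, x⟫ + δ * ‖u‖ ^ 2 := by
    rw [inner_add_right, real_inner_smul_right, real_inner_self_eq_norm_sq]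
  have h2 : ‖x + δ • u‖ ^ 2 = ‖x‖ ^ 2 + 2 * (δ * ⟪x, u⟫) + δ ^ 2 * ‖u‖ ^ 2 := by
    rw [norm_add_sq_real, real_inner_smul_right, norm_smul]
    simp [mul_pow, abs_of_pos hδ0]
  rw [h1, h2] at h
  have hsymm : ⟪x, u⟫ = ⟪u, x⟫ := real_inner_comm u x
  rw [hsymm] at h
  have hδb : δ * (2 * b₀) < 1 := by
    rw [lt_div_iff₀ (by positivity)] at hδ1; linarith
  have hn : (0:ℝ) ≤ ‖u‖ ^ 2 := by positivity
  have hn2 : (0:ℝ) ≤ ‖x‖ ^ 2 := by positivity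
  nlinarith [mul_nonneg hδ0.le hn, mul_nonneg (mul_nonneg hb₀.le (sq_nonneg δ)) hn,
    mul_nonneg (mul_nonneg hδ0.le hb₀.le) hn2,
    mul_nonneg (sub_nonneg.2 hδb.le) hn2,
    mul_nonneg (mul_nonneg hδ0.le hb₀.le) hb₁,
    mul_pos hδ0 hb₀]
end

section
/- Let U_0 satisfy ⟨U_0(x), x⟩ ≤ -b_0|x|^(q+2) + b_1 and |U_0(x)|² ≤ c_0|x|^(2q+2) + c_1(1+|x|^(2q)) for all x, with b_0, b_1, c_0, c_1, q > 0. Define the tamed one-step map T_δ(x) := x + δU_0(x)/(1+δα|x|^q). If α > max{c_0/(2b_0), b_0 + √(b_0² - c_0)} (or just α > c_0/(2b_0) when b_0² < c_0), then there exist ε_δ := 1 - (2b_0α - c_0)δ²/(1+δα)² ∈ (0,1) and C > 0 independent of x and δ such that |T_δ(x)|² ≤ ε_δ·|x|² + C·δ for all |x| > 1 and δ ∈ (0,1). -/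
set_option maxHeartbeats 1000000


open scoped RealInnerProductSpace

lemma key_real (b₀ b₁ c₀ c₁ α δ s u κ C' ip n2 : ℝ)
    (hb₀ : 0 < b₀) (hb₁ : 0 < b₁) (hc₁ : 0 < c₁) (hα : 0 < α)
    (hδ : 0 < δ) (hδ1 : δ < 1) (hs : 1 ≤ s) (hu : 1 ≤ u)
    (hκ : κ * (1 + α) = 2 * b₀ * α - c₀) (hκ0 : 0 < κ) (hC' : 0 ≤ C')
    (hcase : δ * (c₁ * s ^ 2) ≤ κ * (δ * (u * (s * (s - 1)))) + C')
    (hip : ip ≤ -(b₀ * (s * u)) + b₁)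
    (hn2 : n2 ≤ c₀ * (s ^ 2 * u) + c₁ * (1 + s ^ 2)) :
    u + 2 * (δ / (1 + δ * α * s)) * ip + (δ / (1 + δ * α * s)) ^ 2 * n2
      ≤ (1 - (2 * b₀ * α - c₀) * δ ^ 2 / (1 + δ * α) ^ 2) * u + (2 * b₁ + c₁ + C') * δ := by
  have hs0 : (0:ℝ) < s := lt_of_lt_of_le one_pos hs
  have hD : 0 < 1 + δ * α * s := by nlinarith [mul_pos (mul_pos hδ hα) hs0]
  have hW : 0 < 1 + δ * α := by nlinarith [mul_pos hδ hα]
  have e1 : 2 * (δ / (1 + δ * α * s)) * ip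
      ≤ 2 * (δ / (1 + δ * α * s)) * (-(b₀ * (s * u)) + b₁) := by
    apply mul_le_mul_of_nonneg_left hip; positivity
  have e2 : (δ / (1 + δ * α * s)) ^ 2 * n2
      ≤ (δ / (1 + δ * α * s)) ^ 2 * (c₀ * (s ^ 2 * u) + c₁ * (1 + s ^ 2)) := by
    apply mul_le_mul_of_nonneg_left hn2; positivity
  have main : u + 2 * (δ / (1 + δ * α * s)) * (-(b₀ * (s * u)) + b₁)
        + (δ / (1 + δ * α * s)) ^ 2 * (c₀ * (s ^ 2 * u) + c₁ * (1 + s ^ 2))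
      ≤ (1 - (2 * b₀ * α - c₀) * δ ^ 2 / (1 + δ * α) ^ 2) * u + (2 * b₁ + c₁ + C') * δ := by
    rw [← hκ, ← sub_nonneg]
    have heq : (1 - κ * (1 + α) * δ ^ 2 / (1 + δ * α) ^ 2) * u + (2 * b₁ + c₁ + C') * δ
        - (u + 2 * (δ / (1 + δ * α * s)) * (-(b₀ * (s * u)) + b₁)
          + (δ / (1 + δ * α * s)) ^ 2 * (c₀ * (s ^ 2 * u) + c₁ * (1 + s ^ 2)))
        = ((2 * b₁ + c₁ + C') * δ * (1 + δ * α * s) ^ 2 * (1 + δ * α) ^ 2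
            - (2 * δ * (-(b₀ * (s * u)) + b₁) * (1 + δ * α * s) * (1 + δ * α) ^ 2
              + δ ^ 2 * (c₀ * (s ^ 2 * u) + c₁ * (1 + s ^ 2)) * (1 + δ * α) ^ 2
              + κ * (1 + α) * δ ^ 2 * u * (1 + δ * α * s) ^ 2))
          / ((1 + δ * α * s) ^ 2 * (1 + δ * α) ^ 2) := by
      field_simp
      ring
    rw [heq]
    apply div_nonneg _ (by positivity)
    have hP1 : (1 + α) * (1 + δ * α * s) ^ 2
        ≤ (1 + δ * α) ^ 2 * ((1 + α) * s ^ 2 - s * (s - 1)) := by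
      nlinarith [mul_nonneg (mul_nonneg (mul_nonneg hδ.le (sq_nonneg α)) (mul_nonneg (by linarith : (0:ℝ) ≤ s) (by linarith : (0:ℝ) ≤ s - 1))) (by linarith : (0:ℝ) ≤ 2 - δ),
        mul_nonneg hα.le (by nlinarith : (0:ℝ) ≤ s ^ 2 - 1)]
    have gap1 : 0 ≤ κ * δ ^ 2 * u * ((1 + δ * α) ^ 2 * ((1 + α) * s ^ 2 - s * (s - 1)))
        - κ * δ ^ 2 * u * ((1 + α) * (1 + δ * α * s) ^ 2) := by
      have h := mul_le_mul_of_nonneg_left hP1 (by positivity : (0:ℝ) ≤ κ * δ ^ 2 * u)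
      linarith
    have gap2 : 0 ≤ (1 + δ * α) ^ 2 * (δ * (κ * (δ * (u * (s * (s - 1)))) + C'))
        - (1 + δ * α) ^ 2 * (δ * (δ * (c₁ * s ^ 2))) := by
      have h := mul_le_mul_of_nonneg_left hcase hδ.le
      have h2 := mul_le_mul_of_nonneg_left h (by positivity : (0:ℝ) ≤ (1 + δ * α) ^ 2)
      linarith
    have res : 0 ≤ (1 + δ * α) ^ 2 * δ * ((2 * b₁ + c₁ + C') * (1 + δ * α * s) ^ 2
        - 2 * b₁ * (1 + δ * α * s) - δ * c₁ - C' + 2 * b₀ * (s * u)) := by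
      apply mul_nonneg (by positivity)
      have hD1 : 1 ≤ 1 + δ * α * s := by nlinarith [mul_pos (mul_pos hδ hα) hs0]
      have hDsq : 1 + δ * α * s ≤ (1 + δ * α * s) ^ 2 := by nlinarith
      have h1 : 2 * b₁ * (1 + δ * α * s) ≤ 2 * b₁ * (1 + δ * α * s) ^ 2 :=
        mul_le_mul_of_nonneg_left hDsq (by linarith)
      have h2 : δ * c₁ ≤ c₁ * (1 + δ * α * s) ^ 2 := by
        have : (1:ℝ) ≤ (1 + δ * α * s) ^ 2 := by nlinarith
        nlinarith
      have h3 : C' ≤ C' * (1 + δ * α * s) ^ 2 := by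
        have : (1:ℝ) ≤ (1 + δ * α * s) ^ 2 := by nlinarith
        nlinarith
      have h4 : 0 ≤ 2 * b₀ * (s * u) := by positivity
      nlinarith [h1, h2, h3, h4]
    have hscale : (2 * b₀ * α - c₀) * (δ ^ 2 * u * s ^ 2 * (1 + δ * α) ^ 2)
        = κ * (1 + α) * (δ ^ 2 * u * s ^ 2 * (1 + δ * α) ^ 2) := by rw [hκ]
    linarith [gap1, gap2, res, hscale]
  linarith

/-- One-step contraction estimate for the truncated tamed Euler drift map
`T_δ(x) = x + δ U₀(x)/(1+δα|x|^q)` under Lyapunov and polynomial growth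
conditions, for a suitable choice of `α`. -/
theorem tamed_one_step_contraction {N : ℕ}
    (U₀ : EuclideanSpace ℝ (Fin N) → EuclideanSpace ℝ (Fin N))
    (b₀ b₁ c₀ c₁ q α : ℝ)
    (hb₀ : 0 < b₀) (hb₁ : 0 < b₁) (hc₀ : 0 < c₀) (hc₁ : 0 < c₁) (hq : 0 < q)
    (hlyap : ∀ x, ⟪U₀ x, x⟫ ≤ -b₀ * ‖x‖ ^ (q + 2) + b₁)
    (hgrowth : ∀ x, ‖U₀ x‖ ^ 2 ≤ c₀ * ‖x‖ ^ (2 * q + 2) + c₁ * (1 + ‖x‖ ^ (2 * q)))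
    (hα : (b₀ ^ 2 < c₀ ∧ c₀ / (2 * b₀) < α) ∨
          (c₀ ≤ b₀ ^ 2 ∧ max (c₀ / (2 * b₀)) (b₀ + Real.sqrt (b₀ ^ 2 - c₀)) < α)) :
    ∃ C : ℝ, 0 < C ∧ ∀ δ : ℝ, 0 < δ → δ < 1 →
      (0 < 1 - (2 * b₀ * α - c₀) * δ ^ 2 / (1 + δ * α) ^ 2 ∧
        1 - (2 * b₀ * α - c₀) * δ ^ 2 / (1 + δ * α) ^ 2 < 1) ∧
      ∀ x : EuclideanSpace ℝ (Fin N), 1 < ‖x‖ →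
        ‖x + (δ / (1 + δ * α * ‖x‖ ^ q)) • U₀ x‖ ^ 2
          ≤ (1 - (2 * b₀ * α - c₀) * δ ^ 2 / (1 + δ * α) ^ 2) * ‖x‖ ^ 2 + C * δ := by
  have hb2 : (0:ℝ) < 2 * b₀ := by linarith
  have hdiv : c₀ / (2 * b₀) < α := by
    rcases hα with ⟨_, h⟩ | ⟨_, h⟩
    · exact h
    · exact lt_of_le_of_lt (le_max_left _ _) h
  have hα0 : 0 < α := lt_trans (div_pos hc₀ hb2) hdiv
  have hK0 : 0 < 2 * b₀ * α - c₀ := by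
    have := (div_lt_iff₀ hb2).mp hdiv
    nlinarith
  have hαsq : 2 * b₀ * α - c₀ < α ^ 2 := by
    rcases hα with ⟨h1, _⟩ | ⟨h1, h2⟩
    · nlinarith [sq_nonneg (α - b₀)]
    · have h3 : b₀ + Real.sqrt (b₀ ^ 2 - c₀) < α := lt_of_le_of_lt (le_max_right _ _) h2
      have h4 : Real.sqrt (b₀ ^ 2 - c₀) ^ 2 = b₀ ^ 2 - c₀ := Real.sq_sqrt (by linarith)
      have h5 := Real.sqrt_nonneg (b₀ ^ 2 - c₀)
      nlinarith [mul_pos (by linarith : (0:ℝ) < α - b₀ - Real.sqrt (b₀ ^ 2 - c₀))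
        (by linarith : (0:ℝ) < α - b₀ + Real.sqrt (b₀ ^ 2 - c₀))]
  set κ : ℝ := (2 * b₀ * α - c₀) / (1 + α) with hκdef
  have hκ0 : 0 < κ := div_pos hK0 (by linarith)
  have hκeq : κ * (1 + α) = 2 * b₀ * α - c₀ := div_mul_cancel₀ _ (by positivity)
  set M : ℝ := max (2 * c₁ / κ) (2 ^ ((2:ℝ) / q)) with hMdef
  have hM0 : 0 < M := lt_of_lt_of_le (Real.rpow_pos_of_pos two_pos _) (le_max_right _ _)
  have hC'pos : 0 < c₁ * M ^ q := mul_pos hc₁ (Real.rpow_pos_of_pos hM0 q)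
  refine ⟨2 * b₁ + c₁ + c₁ * M ^ q, by linarith, ?_⟩
  intro δ hδ0 hδ1
  have hδα : 0 < δ * α := mul_pos hδ0 hα0
  have hW : 0 < 1 + δ * α := by linarith
  have hW2 : (0:ℝ) < (1 + δ * α) ^ 2 := by positivity
  have hnum : (2 * b₀ * α - c₀) * δ ^ 2 < (1 + δ * α) ^ 2 := by
    nlinarith [mul_lt_mul_of_pos_right hαsq (by positivity : (0:ℝ) < δ ^ 2)]
  constructor
  · constructor
    · have := (div_lt_one hW2).mpr hnum
      linarith
    · have : 0 < (2 * b₀ * α - c₀) * δ ^ 2 / (1 + δ * α) ^ 2 :=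
        div_pos (by positivity) hW2
      linarith
  intro x hx
  have hr0 : (0:ℝ) < ‖x‖ := by linarith
  have hs : 1 ≤ ‖x‖ ^ q :=
    le_of_lt ((Real.one_lt_rpow_iff_of_pos hr0).mpr (Or.inl ⟨hx, hq⟩))
  have hs0 : (0:ℝ) < ‖x‖ ^ q := by linarith
  have hu : 1 ≤ ‖x‖ ^ 2 := by nlinarith
  have hqq2 : ‖x‖ ^ (q + 2) = ‖x‖ ^ q * ‖x‖ ^ 2 := by
    rw [Real.rpow_add hr0, Real.rpow_two]
  have h2q : ‖x‖ ^ (2 * q) = (‖x‖ ^ q) ^ 2 := by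
    rw [mul_comm, Real.rpow_mul hr0.le, Real.rpow_two]
  have h2q2 : ‖x‖ ^ (2 * q + 2) = (‖x‖ ^ q) ^ 2 * ‖x‖ ^ 2 := by
    rw [Real.rpow_add hr0, h2q, Real.rpow_two]
  have hsq_uq : (‖x‖ ^ q) ^ 2 = (‖x‖ ^ 2) ^ q := by
    rw [← h2q, ← Real.rpow_two ‖x‖, ← Real.rpow_mul hr0.le]
  have hip : ⟪U₀ x, x⟫ ≤ -(b₀ * (‖x‖ ^ q * ‖x‖ ^ 2)) + b₁ := by
    have h := hlyap x
    rw [hqq2] at h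
    linarith
  have hn2 : ‖U₀ x‖ ^ 2 ≤ c₀ * ((‖x‖ ^ q) ^ 2 * ‖x‖ ^ 2) + c₁ * (1 + (‖x‖ ^ q) ^ 2) := by
    have h := hgrowth x
    rw [h2q2, h2q] at h
    linarith
  have hcase : δ * (c₁ * (‖x‖ ^ q) ^ 2)
      ≤ κ * (δ * (‖x‖ ^ 2 * (‖x‖ ^ q * (‖x‖ ^ q - 1)))) + c₁ * M ^ q := by
    rcases le_or_gt (‖x‖ ^ 2) M with hMu | hMu
    · have h1 : (‖x‖ ^ q) ^ 2 ≤ M ^ q := by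
        rw [hsq_uq]
        exact Real.rpow_le_rpow (by positivity) hMu hq.le
      have h2 : 0 ≤ κ * (δ * (‖x‖ ^ 2 * (‖x‖ ^ q * (‖x‖ ^ q - 1)))) := by
        apply mul_nonneg hκ0.le
        apply mul_nonneg hδ0.le
        apply mul_nonneg (by positivity)
        exact mul_nonneg hs0.le (by linarith)
      have h3 : δ * (c₁ * (‖x‖ ^ q) ^ 2) ≤ c₁ * (‖x‖ ^ q) ^ 2 := by
        nlinarith [mul_pos hc₁ (pow_pos hs0 2)]
      have h4 : c₁ * (‖x‖ ^ q) ^ 2 ≤ c₁ * M ^ q := mul_le_mul_of_nonneg_left h1 hc₁.le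
      linarith
    · have hu2 : 2 * c₁ / κ < ‖x‖ ^ 2 := lt_of_le_of_lt (le_max_left _ _) hMu
      have h2c : 2 * c₁ ≤ κ * ‖x‖ ^ 2 := by
        rw [div_lt_iff₀ hκ0] at hu2
        nlinarith
      have hs2 : 2 ≤ ‖x‖ ^ q := by
        have h1 : (2:ℝ) ^ ((2:ℝ) / q) ≤ ‖x‖ ^ 2 := le_trans (le_max_right _ _) hMu.le
        have h2 : ((2:ℝ) ^ ((2:ℝ) / q)) ^ q ≤ (‖x‖ ^ 2) ^ q :=
          Real.rpow_le_rpow (by positivity) h1 hq.le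
        have h3 : ((2:ℝ) ^ ((2:ℝ) / q)) ^ q = 4 := by
          rw [← Real.rpow_mul (by norm_num), div_mul_cancel₀ _ (ne_of_gt hq)]
          rw [Real.rpow_two]
          norm_num
        rw [h3, ← hsq_uq] at h2
        nlinarith
      have t1 : 0 ≤ δ * (c₁ * (‖x‖ ^ q * (‖x‖ ^ q - 2))) := by
        apply mul_nonneg hδ0.le
        apply mul_nonneg hc₁.le
        exact mul_nonneg hs0.le (by linarith)
      have t2 : 0 ≤ δ * ((κ * ‖x‖ ^ 2 - 2 * c₁) * (‖x‖ ^ q * (‖x‖ ^ q - 1))) := by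
        apply mul_nonneg hδ0.le
        apply mul_nonneg (by linarith)
        exact mul_nonneg hs0.le (by linarith)
      nlinarith [t1, t2, hC'pos]
  have hexp : ‖x + (δ / (1 + δ * α * ‖x‖ ^ q)) • U₀ x‖ ^ 2
      = ‖x‖ ^ 2 + 2 * ((δ / (1 + δ * α * ‖x‖ ^ q)) * ⟪U₀ x, x⟫)
        + (δ / (1 + δ * α * ‖x‖ ^ q)) ^ 2 * ‖U₀ x‖ ^ 2 := by
    rw [norm_add_sq_real, real_inner_smul_right, real_inner_comm, norm_smul, mul_pow,
      Real.norm_eq_abs, sq_abs]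
  have hk := key_real b₀ b₁ c₀ c₁ α δ (‖x‖ ^ q) (‖x‖ ^ 2) κ (c₁ * M ^ q) ⟪U₀ x, x⟫
    (‖U₀ x‖ ^ 2) hb₀ hb₁ hc₁ hα0 hδ0 hδ1 hs hu hκeq hκ0 hC'pos.le hcase hip hn2
  rw [hexp]
  linarith [hk]
end

section
/- Let β ≥ 1, λ(y) > 0, and let M be an N×N matrix with -βλ(y)|v|² ≤ v^T M v ≤ -λ(y)|v|² for all v. Set A := I - δM with δ > 0. Then for every v ∈ ℝ^N, v^T (M(I-δM)^{-1}) v ≤ -λ(y)(1+δλ(y))/(1+δβλ(y))² · |v|² ≤ -λ(y)/(β²(1+δλ(y))) · |v|². -/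
open scoped RealInnerProductSpace

/-- Key quadratic-form estimate: for `-βλ|v|² ≤ vᵀMv ≤ -λ|v|²`, `β ≥ 1`,
`λ, δ > 0` and `A = I - δM`, one has
`vᵀ M A⁻¹ v ≤ -λ(1+δλ)/(1+δβλ)² |v|² ≤ -λ/(β²(1+δλ)) |v|²`. -/
theorem modified_drift_quadratic_form_bound {N : ℕ}
    (M : EuclideanSpace ℝ (Fin N) →L[ℝ] EuclideanSpace ℝ (Fin N))
    (β l δ : ℝ) (hβ : 1 ≤ β) (hl : 0 < l) (hδ : 0 < δ)
    (hlo : ∀ v, -(β * l) * ‖v‖ ^ 2 ≤ ⟪M v, v⟫)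
    (hhi : ∀ v, ⟪M v, v⟫ ≤ -l * ‖v‖ ^ 2) :
    ∀ v w : EuclideanSpace ℝ (Fin N), w - δ • M w = v →
      ⟪M w, v⟫ ≤ -(l * (1 + δ * l) / (1 + δ * β * l) ^ 2) * ‖v‖ ^ 2 ∧
      -(l * (1 + δ * l) / (1 + δ * β * l) ^ 2) * ‖v‖ ^ 2
        ≤ -(l / (β ^ 2 * (1 + δ * l))) * ‖v‖ ^ 2 := by
  intro v w hv
  have hβ2 : 1 ≤ β ^ 2 := by nlinarith
  have hD : (0:ℝ) < (1 + δ * β * l) ^ 2 := by positivity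
  have hs1 : ⟪M w, w⟫ ≤ -l * ‖w‖ ^ 2 := hhi w
  have hs2 : -(β * l) * ‖w‖ ^ 2 ≤ ⟪M w, w⟫ := hlo w
  have hcs : |⟪M w, w⟫| ≤ ‖M w‖ * ‖w‖ := abs_real_inner_le_norm _ _
  have hb : l ^ 2 * ‖w‖ ^ 2 ≤ ‖M w‖ ^ 2 := by
    rcases eq_or_lt_of_le (norm_nonneg w) with h0 | h0
    · rw [← h0]; simp [norm_nonneg]
    · have h1 : l * ‖w‖ ^ 2 ≤ ‖M w‖ * ‖w‖ := by
        calc l * ‖w‖ ^ 2 ≤ -⟪M w, w⟫ := by linarith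
        _ ≤ |⟪M w, w⟫| := neg_le_abs _
        _ ≤ ‖M w‖ * ‖w‖ := hcs
      have h2 : l * ‖w‖ ≤ ‖M w‖ := by
        have := (mul_le_mul_iff_of_pos_right h0).mp (by nlinarith : l * ‖w‖ * ‖w‖ ≤ ‖M w‖ * ‖w‖)
        linarith
      nlinarith [norm_nonneg (M w), norm_nonneg w, mul_pos hl h0]
  have hsm : ⟪M w, δ • M w⟫ = δ * ‖M w‖ ^ 2 := by
    rw [real_inner_smul_right, real_inner_self_eq_norm_sq]
  have hinner : ⟪M w, v⟫ = ⟪M w, w⟫ - δ * ‖M w‖ ^ 2 := by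
    rw [← hv, inner_sub_right, hsm]
  have hnorm : ‖v‖ ^ 2 = ‖w‖ ^ 2 - 2 * δ * ⟪M w, w⟫ + δ ^ 2 * ‖M w‖ ^ 2 := by
    rw [← hv, norm_sub_sq_real, real_inner_smul_right, norm_smul, Real.norm_eq_abs,
      mul_pow, sq_abs, real_inner_comm]
    ring
  have hcoef : 0 ≤ δ * (1 + δ * β * l) ^ 2 - δ ^ 2 * l * (1 + δ * l) := by
    nlinarith [mul_nonneg (mul_nonneg (mul_pos hδ hδ).le hl.le) (sub_nonneg.mpr hβ),
      mul_nonneg (mul_nonneg (mul_nonneg (mul_pos hδ hδ).le hδ.le) (mul_pos hl hl).le)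
        (sub_nonneg.mpr hβ2)]
  have key : (⟪M w, w⟫ - δ * ‖M w‖ ^ 2) * (1 + δ * β * l) ^ 2 ≤
      -(l * (1 + δ * l)) * (‖w‖ ^ 2 - 2 * δ * ⟪M w, w⟫ + δ ^ 2 * ‖M w‖ ^ 2) := by
    nlinarith [mul_le_mul_of_nonneg_right hs1 hD.le,
      mul_le_mul_of_nonneg_left hs2 (by positivity : (0:ℝ) ≤ 2 * δ * l * (1 + δ * l)),
      mul_le_mul_of_nonneg_right hb hcoef,
      mul_nonneg (mul_nonneg (sq_nonneg ‖w‖)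
        (by positivity : (0:ℝ) ≤ l ^ 3 * (1 + δ * l) * δ ^ 2)) (sub_nonneg.mpr hβ2)]
  constructor
  · rw [hinner, hnorm,
      show -(l * (1 + δ * l) / (1 + δ * β * l) ^ 2) *
          (‖w‖ ^ 2 - 2 * δ * ⟪M w, w⟫ + δ ^ 2 * ‖M w‖ ^ 2)
        = (-(l * (1 + δ * l)) * (‖w‖ ^ 2 - 2 * δ * ⟪M w, w⟫ + δ ^ 2 * ‖M w‖ ^ 2))
            / (1 + δ * β * l) ^ 2 from by ring,
      le_div_iff₀ hD]
    exact key
  · have hV : (0:ℝ) ≤ ‖v‖ ^ 2 := sq_nonneg _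
    have h1 : 1 + δ * β * l ≤ β * (1 + δ * l) := by nlinarith
    have hsq : (1 + δ * β * l) ^ 2 ≤ (β * (1 + δ * l)) ^ 2 :=
      pow_le_pow_left₀ (by positivity) h1 2
    have h2 : l / (β ^ 2 * (1 + δ * l)) ≤ l * (1 + δ * l) / (1 + δ * β * l) ^ 2 := by
      rw [div_le_div_iff₀ (by positivity) hD]
      calc l * (1 + δ * β * l) ^ 2 ≤ l * (β * (1 + δ * l)) ^ 2 :=
            mul_le_mul_of_nonneg_left hsq hl.le
        _ = l * (1 + δ * l) * (β ^ 2 * (1 + δ * l)) := by ring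
    rw [neg_mul, neg_mul]
    exact neg_le_neg (mul_le_mul_of_nonneg_right h2 hV)
end
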